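/- Let Ω₁,…,Ωₙ (n≥2) be closed subsets of a Banach space X, x̄ ∈ ∩_{i=1}^n Ωᵢ, a₁,…,a_{n−1} ∈ X, ε > 0 and φ ∈ 𝒞. Suppose ∩_{i=1}^{n−1}(Ωᵢ−aᵢ) ∩ Ωₙ = ∅ and φ(max_{1≤i≤n−1}‖aᵢ‖) < φ(d(Ω₁−a₁,…,Ω_{n−1}−a_{n−1},Ωₙ)) + ε. Then for any λ>0 and η>0 there exist points ωᵢ ∈ Ωᵢ ∩ B_λ(x̄) (i=1,…,n−1) and ωₙ ∈ Ωₙ ∩ B_η(x̄) such that 0 < max_{1≤i≤n−1}‖ωₙ+aᵢ−ωᵢ‖ ≤ max_{1≤i≤n−1}‖aᵢ‖, the limsup over Ωᵢ ∋ uᵢ → ωᵢ (i=1,…,n), (u₁,…,uₙ) ≠ (ω₁,…,ωₙ), of [φ(max_{1≤i≤n−1}‖ωₙ+aᵢ−ωᵢ‖) − φ(max_{1≤i≤n−1}‖uₙ+aᵢ−uᵢ‖)] / ‖(u₁−ω₁,…,uₙ−ωₙ)‖_{λ,η} is strictly less than ε, and moreover, if φ is differentiable at max_{1≤i≤n−1}‖ωₙ+aᵢ−ωᵢ‖,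 then φ'(max_{1≤i≤n−1}‖ωₙ+aᵢ−ωᵢ‖) times the limsup over Ωᵢ ∋ uᵢ → ωᵢ (i=1,…,n), (u₁,…,uₙ) ≠ (ω₁,…,ωₙ), of [max_{1≤i≤n−1}‖ωₙ+aᵢ−ωᵢ‖ − max_{1≤i≤n−1}‖uₙ+aᵢ−uᵢ‖] / ‖(u₁−ω₁,…,uₙ−ωₙ)‖_{λ,η} is strictly less than ε (with the convention 0·(+∞)=0). -/

import Mathlib

open Filter

/-- The nonintersect index `d(Ω₁,…,Ω_m,Ωₙ) = inf{ max_i ‖uₙ − uᵢ‖ : uᵢ ∈ Ωᵢ, uₙ ∈ Ωₙ }`. -/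
noncomputable def nonintersectIndex {X : Type*} [NormedAddCommGroup X] {m : ℕ}
    (Ω : Fin m → Set X) (Ωn : Set X) : ℝ :=
  sInf {r : ℝ | ∃ (u : Fin m → X) (un : X),
    (∀ i, u i ∈ Ω i) ∧ un ∈ Ωn ∧ r = ⨆ i, ‖un - u i‖}

/-!
Rescaling the coordinates by `λ⁻¹` and `η⁻¹` turns the sup distance on `Xᵐ × X` into the
parametric norm `‖·‖_{λ,η}`. Ekeland's variational principle, applied to
`φ (max_i ‖uₙ + aᵢ − uᵢ‖)` on `Ω₁ × ⋯ × Ω_m × Ωₙ` from `(x̄, …, x̄)` with a constant `σ` strictly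
between `φ (max_i ‖aᵢ‖) − φ (d)` and `ε`, gives a point whose Ekeland inequality is the slope
estimate. As the function is `≥ φ (d)` everywhere, it exceeds its infimum at `(x̄, …, x̄)` by less
than `σ`, which keeps the Ekeland point within parametric distance `1` of `(x̄, …, x̄)`;
non-intersection makes the gap there positive. Where `φ` has a derivative `c' > 0`, it decreases
to the left at a rate close to `c'`, which transfers the slope estimate from `φ ∘ gap` to the gap.
-/

open Set Topology

section Ekeland

variable {M : Type*} [MetricSpace M] {f : M → ℝ} {σ : ℝ}

def ekelandSet (f : M → ℝ) (σ : ℝ) (z : M) : Set M := {y | f y + σ * dist y z ≤ f z}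

lemma mem_ekelandSet_self (z : M) : z ∈ ekelandSet f σ z := by
  simp [ekelandSet]

lemma ekelandSet_subset_of_mem (hσ : 0 ≤ σ) {y z : M} (hy : y ∈ ekelandSet f σ z) :
    ekelandSet f σ y ⊆ ekelandSet f σ z := fun w hw => by
  simp only [ekelandSet, mem_ofPred_eq] at hy hw ⊢
  nlinarith [dist_triangle w y z]

lemma isClosed_ekelandSet (hf : LowerSemicontinuous f) (z : M) :
    IsClosed (ekelandSet f σ z) :=
  (hf.add (continuous_const.mul (continuous_id.dist continuous_const)).lowerSemicontinuous)
    |>.isClosed_preimage (f z)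

theorem exists_ekeland [CompleteSpace M] (hf : LowerSemicontinuous f) (hbdd : BddBelow (range f))
    (hσ : 0 < σ) (x₀ : M) :
    ∃ x, f x + σ * dist x x₀ ≤ f x₀ ∧ ∀ y, f x ≤ f y + σ * dist y x := by
  set D := ekelandSet f σ
  have hnext (k : ℕ) (z : M) : ∃ y ∈ D z, f y < sInf (f '' D z) + 1 / (k + 1) := by
    obtain ⟨_, ⟨y, hy, rfl⟩, hlt⟩ := exists_lt_of_csInf_lt (s := f '' D z)
      ⟨f z, z, mem_ekelandSet_self z, rfl⟩ (lt_add_of_pos_right _ Nat.one_div_pos_of_nat)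
    exact ⟨y, hy, hlt⟩
  choose next hnextD hnextf using hnext
  let x : ℕ → M := fun k => Nat.rec x₀ next k
  have hanti : Antitone (D ∘ x) :=
    antitone_nat_of_succ_le fun k => ekelandSet_subset_of_mem hσ.le (hnextD k (x k))
  have hmem {j k : ℕ} (hjk : j ≤ k) : x k ∈ D (x j) := hanti hjk (mem_ekelandSet_self _)
  -- the sets `D (x k)` shrink to a point, as the choice of `x (k + 1)` is almost optimal
  have hsmall (k : ℕ) {y : M} (hy : y ∈ D (x (k + 1))) : σ * dist y (x (k + 1)) ≤ 1 / (k + 1) := by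
    have hinf : sInf (f '' D (x k)) ≤ f y :=
      csInf_le (hbdd.mono (image_subset_range _ _)) ⟨y, hanti k.le_succ hy, rfl⟩
    have := hnextf k (x k)
    simp only [D, ekelandSet, mem_ofPred_eq] at hy
    linarith
  have hdist (k : ℕ) {y : M} (hy : y ∈ D (x (k + 1))) : dist y (x (k + 1)) ≤ 1 / (k + 1) / σ := by
    rw [le_div_iff₀ hσ, mul_comm]; exact hsmall k hy
  have hcauchy : CauchySeq x := by
    refine Metric.cauchySeq_iff'.2 fun r hr => ?_
    obtain ⟨k, hk⟩ := exists_nat_one_div_lt (mul_pos hr hσ)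
    refine ⟨k + 1, fun n hn => (hdist k (hmem hn)).trans_lt ?_⟩
    rwa [div_lt_iff₀ hσ]
  obtain ⟨xs, hxs⟩ := cauchySeq_tendsto_of_complete hcauchy
  have hxsD (j : ℕ) : xs ∈ D (x j) :=
    (isClosed_ekelandSet hf _).mem_of_tendsto hxs (eventually_atTop.2 ⟨j, fun _ => hmem⟩)
  refine ⟨xs, hxsD 0, fun y => ?_⟩
  by_contra! hlt
  have hyD (k : ℕ) : y ∈ D (x (k + 1)) :=
    ekelandSet_subset_of_mem hσ.le (hxsD (k + 1)) hlt.le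
  have hy : Tendsto (fun k => x (k + 1)) atTop (𝓝 y) := by
    refine tendsto_iff_dist_tendsto_zero.2 (squeeze_zero (fun _ => dist_nonneg)
      (fun k => (dist_comm _ y).trans_le (hdist k (hyD k))) ?_)
    simpa using tendsto_one_div_add_atTop_nhds_zero_nat.div_const σ
  obtain rfl := tendsto_nhds_unique hy (hxs.comp (tendsto_add_atTop_nat 1))
  simp at hlt

theorem IsClosed.exists_ekeland [CompleteSpace M] {s : Set M} (hs : IsClosed s)
    (hf : LowerSemicontinuousOn f s) (hbdd : BddBelow (f '' s)) (hσ : 0 < σ) {x₀ : M}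
    (hx₀ : x₀ ∈ s) :
    ∃ x ∈ s, f x + σ * dist x x₀ ≤ f x₀ ∧ ∀ y ∈ s, f x ≤ f y + σ * dist y x := by
  have := hs.completeSpace_coe
  obtain ⟨x, hx₀, hmin⟩ := _root_.exists_ekeland (lowerSemicontinuous_restrict_iff.2 hf)
    (by rwa [range_domRestrict]) hσ ⟨x₀, hx₀⟩
  exact ⟨x, x.2, hx₀, fun y hy => hmin ⟨y, hy⟩⟩

end Ekeland

lemma pi_norm_eq_iSup_norm {ι : Type*} [Fintype ι] {π : ι → Type*}
    [∀ i, SeminormedAddCommGroup (π i)] (f : ∀ i, π i) : ‖f‖ = ⨆ i, ‖f i‖ :=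
  le_antisymm ((pi_norm_le_iff_of_nonneg (Real.iSup_nonneg fun _ => norm_nonneg _)).2
      fun i => le_ciSup (f := fun i => ‖f i‖) (Finite.bddAbove_range _) i)
    (Real.iSup_le (fun i => norm_le_pi_norm f i) (norm_nonneg f))

lemma HasDerivAt.nonneg_of_monotoneOn_Ici {φ : ℝ → ℝ} {c t₀ : ℝ} (hφ : HasDerivAt φ c t₀)
    (hmono : MonotoneOn φ (Ici t₀)) : 0 ≤ c :=
  hφ.hasDerivWithinAt.nonneg_of_monotoneOn (accPt_principal_iff_nhdsWithin.2
    (by rw [sdiff_singleton_eq_self (self_notMem_Ioi (a := t₀))]; infer_instance))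
    (hmono.mono Ioi_subset_Ici_self)

lemma HasDerivAt.eventually_sub_le_mul_sub {φ : ℝ → ℝ} {c t₀ K : ℝ} (hφ : HasDerivAt φ c t₀)
    (hK : 0 < K) (hcK : 1 < c * K) : ∀ᶠ t in 𝓝 t₀, t ≤ t₀ → t₀ - t ≤ K * (φ t₀ - φ t) := by
  have hslope : ∀ᶠ t in 𝓝[≠] t₀, K⁻¹ < slope φ t₀ t :=
    hasDerivAt_iff_tendsto_slope.1 hφ |>.eventually
      (lt_mem_nhds (by rwa [inv_lt_iff_one_lt_mul₀ hK]))
  filter_upwards [eventually_nhdsWithin_iff.1 hslope] with t ht hle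
  rcases hle.lt_or_eq with hlt | rfl
  · have := ht hlt.ne
    rw [slope_def_field, lt_div_iff_of_neg (sub_neg.2 hlt)] at this
    have := mul_lt_mul_of_pos_left this hK
    rw [← mul_assoc, mul_inv_cancel₀ hK.ne'] at this
    linarith
  · simp

section ParamNorm

variable {ι X : Type*} [Fintype ι] [NormedAddCommGroup X] [NormedSpace ℝ X] {lam eta : ℝ}

noncomputable def paramNorm (lam eta : ℝ) (v : (ι → X) × X) : ℝ :=
  max (⨆ i, lam⁻¹ * ‖v.1 i‖) (eta⁻¹ * ‖v.2‖)

lemma paramNorm_eq_norm (hlam : 0 < lam) (heta : 0 < eta) (v : (ι → X) × X) :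
    paramNorm lam eta v = ‖(lam⁻¹ • v.1, eta⁻¹ • v.2)‖ := by
  rw [Prod.norm_mk, pi_norm_eq_iSup_norm]
  simp only [paramNorm, Pi.smul_apply, norm_smul, norm_inv, Real.norm_of_nonneg hlam.le,
    Real.norm_of_nonneg heta.le]

lemma paramNorm_nonneg (hlam : 0 < lam) (heta : 0 < eta) (v : (ι → X) × X) :
    0 ≤ paramNorm lam eta v :=
  paramNorm_eq_norm hlam heta v ▸ norm_nonneg _

lemma paramNorm_lt_one_iff (hlam : 0 < lam) (heta : 0 < eta) (v : (ι → X) × X) :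
    paramNorm lam eta v < 1 ↔ (∀ i, ‖v.1 i‖ < lam) ∧ ‖v.2‖ < eta := by
  rw [paramNorm_eq_norm hlam heta, Prod.norm_mk, max_lt_iff, pi_norm_lt_iff one_pos]
  simp only [Pi.smul_apply, norm_smul, norm_inv, Real.norm_of_nonneg hlam.le,
    Real.norm_of_nonneg heta.le, inv_mul_lt_iff₀ hlam, inv_mul_lt_iff₀ heta, mul_one]

lemma paramNorm_sub_eq_dist (hlam : 0 < lam) (heta : 0 < eta) (p q : (ι → X) × X) :
    paramNorm lam eta (p - q) = dist (lam⁻¹ • p.1, eta⁻¹ • p.2) (lam⁻¹ • q.1, eta⁻¹ • q.2) := by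
  simp only [paramNorm_eq_norm hlam heta, dist_eq_norm, Prod.mk_sub_mk, Prod.fst_sub,
    Prod.snd_sub, smul_sub]

variable [CompleteSpace X]

theorem IsClosed.exists_ekeland_paramNorm {A : Set ((ι → X) × X)} (hA : IsClosed A)
    {f : (ι → X) × X → ℝ} (hf : Continuous f) (hbdd : BddBelow (f '' A)) (hlam : 0 < lam)
    (heta : 0 < eta) {σ : ℝ} (hσ : 0 < σ) {p₀ : (ι → X) × X} (hp₀ : p₀ ∈ A) :
    ∃ q ∈ A, f q + σ * paramNorm lam eta (q - p₀) ≤ f p₀ ∧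
      ∀ p ∈ A, f q ≤ f p + σ * paramNorm lam eta (p - q) := by
  set T : (ι → X) × X → (ι → X) × X := fun p => (lam • p.1, eta • p.2)
  set S : (ι → X) × X → (ι → X) × X := fun p => (lam⁻¹ • p.1, eta⁻¹ • p.2)
  have hTS (p) : T (S p) = p := by simp [T, S, smul_inv_smul₀ hlam.ne', smul_inv_smul₀ heta.ne']
  have hST (p) : S (T p) = p := by simp [T, S, inv_smul_smul₀ hlam.ne', inv_smul_smul₀ heta.ne']
  have hdist (p q) : paramNorm lam eta (p - q) = dist (S p) (S q) :=
    paramNorm_sub_eq_dist hlam heta p q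
  have hT : Continuous T := by fun_prop
  obtain ⟨x, hxA, hx₀, hmin⟩ := (hA.preimage hT).exists_ekeland (f := f ∘ T)
    ((hf.comp hT).lowerSemicontinuous.lowerSemicontinuousOn _)
    (hbdd.mono (by rintro _ ⟨x, hx, rfl⟩; exact ⟨T x, hx, rfl⟩)) hσ
    (x₀ := S p₀) (by simpa [hTS] using hp₀)
  refine ⟨T x, hxA, ?_, fun p hp => ?_⟩
  · rw [hdist, hST]
    simpa only [Function.comp_apply, hTS] using hx₀
  · rw [hdist, hST]
    simpa only [Function.comp_apply, hTS] using hmin (S p) (by rwa [mem_preimage, hTS])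

end ParamNorm

lemma HasDerivAt.exists_mul_lt_and_eventually_sub_le {E : Type*} [TopologicalSpace E]
    {G N : E → ℝ} {A : Set E} {q : E} {φ : ℝ → ℝ} {σ ε c : ℝ} (hφ : HasDerivAt φ c (G q))
    (hc : 0 < c) (hG : ContinuousAt G q) (hN : ∀ p, 0 ≤ N p)
    (hslope : ∀ p ∈ A, φ (G q) - φ (G p) ≤ σ * N p) (hσ : 0 < σ) (hσε : σ < ε) :
    ∃ d, c * d < ε ∧ ∀ᶠ p in 𝓝 q, p ∈ A → G q - G p ≤ d * N p := by
  obtain ⟨K, hcK, hKε⟩ : ∃ K, c⁻¹ < K ∧ K < ε / (σ * c) := exists_between (by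
    rw [div_mul_eq_div_div, lt_div_iff₀ hc, inv_mul_cancel₀ hc.ne', one_lt_div hσ]; exact hσε)
  have hK : 0 < K := (inv_pos.2 hc).trans hcK
  refine ⟨K * σ, ?_, ?_⟩
  · rw [lt_div_iff₀ (mul_pos hσ hc)] at hKε; linarith
  filter_upwards [hG.eventually (hφ.eventually_sub_le_mul_sub hK
    (by rwa [inv_lt_iff_one_lt_mul₀' hc] at hcK))] with p hp hpA
  rcases le_or_gt (G p) (G q) with hle | hlt
  · calc G q - G p ≤ K * (φ (G q) - φ (G p)) := hp hle
      _ ≤ K * (σ * N p) := mul_le_mul_of_nonneg_left (hslope p hpA) hK.le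
      _ = K * σ * N p := by ring
  · exact (sub_neg.2 hlt).le.trans (by have := hN p; positivity)

lemma exists_pos_forall_of_eventually_nhds_prod {ι X : Type*} [Fintype ι]
    [SeminormedAddCommGroup X] {P : (ι → X) × X → Prop} {q : (ι → X) × X}
    (h : ∀ᶠ p in 𝓝 q, P p) :
    ∃ δ > 0, ∀ u un, (∀ i, ‖u i - q.1 i‖ < δ) → ‖un - q.2‖ < δ → P (u, un) := by
  obtain ⟨δ, hδ, hP⟩ := Metric.eventually_nhds_iff.1 h
  refine ⟨δ, hδ, fun u un hu hun => hP ?_⟩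
  rw [Prod.dist_eq, max_lt_iff, dist_pi_lt_iff hδ]
  simpa [dist_eq_norm] using ⟨hu, hun⟩

section Nonintersection

variable {ι X : Type*} [Fintype ι] [NormedAddCommGroup X]

noncomputable def gap (a : ι → X) (p : (ι → X) × X) : ℝ := ⨆ i, ‖p.2 + a i - p.1 i‖

lemma gap_eq_norm (a : ι → X) (p : (ι → X) × X) :
    gap a p = ‖fun i => p.2 + a i - p.1 i‖ :=
  (pi_norm_eq_iSup_norm _).symm

lemma gap_nonneg (a : ι → X) (p : (ι → X) × X) : 0 ≤ gap a p :=
  gap_eq_norm a p ▸ norm_nonneg _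

lemma continuous_gap (a : ι → X) : Continuous (gap a) := by
  simp only [funext (gap_eq_norm a)]
  fun_prop

lemma gap_pos {Ω : ι → Set X} {Ωn : Set X} {a : ι → X}
    (hne : (⋂ i, (fun z => z - a i) '' Ω i) ∩ Ωn = ∅) {p : (ι → X) × X}
    (hp : p ∈ univ.pi Ω ×ˢ Ωn) : 0 < gap a p := by
  rw [gap_eq_norm, norm_pos_iff]
  intro h0
  have hmem : p.2 ∈ (⋂ i, (fun z => z - a i) '' Ω i) ∩ Ωn :=
    ⟨mem_iInter.2 fun i => ⟨p.1 i, hp.1 i trivial,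
      (eq_sub_of_add_eq (sub_eq_zero.1 (congr_fun h0 i))).symm⟩, hp.2⟩
  rwa [hne] at hmem

variable {m : ℕ}

lemma nonintersectIndex_nonneg (Ω : Fin m → Set X) (Ωn : Set X) : 0 ≤ nonintersectIndex Ω Ωn :=
  Real.sInf_nonneg (by rintro _ ⟨u, un, -, -, rfl⟩; exact Real.iSup_nonneg fun _ => norm_nonneg _)

lemma nonintersectIndex_le {Ω : Fin m → Set X} {Ωn : Set X} {u : Fin m → X} {un : X}
    (hu : ∀ i, u i ∈ Ω i) (hun : un ∈ Ωn) : nonintersectIndex Ω Ωn ≤ ⨆ i, ‖un - u i‖ :=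
  csInf_le ⟨0, by rintro _ ⟨u, un, -, -, rfl⟩; exact Real.iSup_nonneg fun _ => norm_nonneg _⟩
    ⟨u, un, hu, hun, rfl⟩

lemma nonintersectIndex_sub_le_gap {Ω : Fin m → Set X} {Ωn : Set X} (a : Fin m → X)
    {p : (Fin m → X) × X} (hp : p ∈ univ.pi Ω ×ˢ Ωn) :
    nonintersectIndex (fun i => (fun z => z - a i) '' Ω i) Ωn ≤ gap a p := by
  convert nonintersectIndex_le (u := fun i => p.1 i - a i)
    (fun i => mem_image_of_mem (· - a i) (hp.1 i trivial)) hp.2 using 1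
  simp only [gap, sub_sub_eq_add_sub]

end Nonintersection

theorem exists_ekeland_point_of_nonintersect {X : Type*} [NormedAddCommGroup X] [NormedSpace ℝ X]
    [CompleteSpace X] {m : ℕ} {Ω : Fin m → Set X} {Ωn : Set X} (hΩ : ∀ i, IsClosed (Ω i))
    (hΩn : IsClosed Ωn) {xbar : X} (hxbar : ∀ i, xbar ∈ Ω i) (hxbarn : xbar ∈ Ωn)
    {a : Fin m → X} {ε : ℝ} {φ : ℝ → ℝ} (hφmono : StrictMonoOn φ (Ici 0))
    (hφcont : ContinuousOn φ (Ici 0))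
    (hd : φ (⨆ i, ‖a i‖) < φ (nonintersectIndex (fun i => (fun z => z - a i) '' Ω i) Ωn) + ε)
    {lam eta : ℝ} (hlam : 0 < lam) (heta : 0 < eta) :
    ∃ σ, 0 < σ ∧ σ < ε ∧ ∃ q ∈ univ.pi Ω ×ˢ Ωn,
      paramNorm lam eta (q - (fun _ => xbar, xbar)) < 1 ∧ φ (gap a q) ≤ φ (⨆ i, ‖a i‖) ∧
      ∀ p ∈ univ.pi Ω ×ˢ Ωn, φ (gap a q) - φ (gap a p) ≤ σ * paramNorm lam eta (p - q) := by
  set dI := nonintersectIndex (fun i => (fun z => z - a i) '' Ω i) Ωn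
  set p₀ : (Fin m → X) × X := (fun _ => xbar, xbar)
  have hp₀ : p₀ ∈ univ.pi Ω ×ˢ Ωn := ⟨fun i _ => hxbar i, hxbarn⟩
  have hgap₀ : gap a p₀ = ⨆ i, ‖a i‖ := by simp [gap, p₀]
  have hφdI (p) (hp : p ∈ univ.pi Ω ×ˢ Ωn) : φ dI ≤ φ (gap a p) :=
    hφmono.monotoneOn (nonintersectIndex_nonneg _ _) (gap_nonneg a p)
      (nonintersectIndex_sub_le_gap a hp)
  have hexcess : 0 ≤ φ (⨆ i, ‖a i‖) - φ dI := hgap₀ ▸ sub_nonneg.2 (hφdI p₀ hp₀)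
  obtain ⟨σ, hσ, hσε⟩ := exists_between (sub_lt_iff_lt_add'.2 hd)
  have hσ0 : 0 < σ := hexcess.trans_lt hσ
  have hA : IsClosed (univ.pi Ω ×ˢ Ωn) := (isClosed_set_pi fun i _ => hΩ i).prod hΩn
  obtain ⟨q, hq, hq₀, hqmin⟩ := hA.exists_ekeland_paramNorm (f := φ ∘ gap a)
    (hφcont.comp_continuous (continuous_gap a) (gap_nonneg a))
    ⟨φ dI, forall_mem_image.2 hφdI⟩ hlam heta hσ0 hp₀
  simp only [Function.comp_apply, hgap₀] at hq₀ hqmin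
  have hN := paramNorm_nonneg hlam heta (q - p₀)
  refine ⟨σ, hσ0, hσε, q, hq, ?_, (le_add_of_nonneg_right (mul_nonneg hσ0.le hN)).trans hq₀,
    fun p hp => by linarith [hqmin p hp]⟩
  refine lt_of_mul_lt_mul_left ?_ hσ0.le
  linarith [hφdI q hq]

/-- `limsup … < ε` is encoded by a bound `c < ε` on the difference quotients near `(ω, ωn)`, and
the convention `0·(+∞) = 0` by the disjunct `c' = 0`. -/
theorem stmt7_general {X : Type*} [NormedAddCommGroup X] [NormedSpace ℝ X] [CompleteSpace X]
    {m : ℕ} (Ω : Fin m → Set X) (Ωn : Set X)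
    (hΩ : ∀ i, IsClosed (Ω i)) (hΩn : IsClosed Ωn)
    (xbar : X) (hxbar : ∀ i, xbar ∈ Ω i) (hxbarn : xbar ∈ Ωn)
    (a : Fin m → X) (ε : ℝ)
    (φ : ℝ → ℝ) (hφmono : StrictMonoOn φ (Set.Ici 0))
    (hφcont : ContinuousOn φ (Set.Ici 0))
    (hne : (⋂ i, (fun z => z - a i) '' Ω i) ∩ Ωn = ∅)
    (hd : φ (⨆ i, ‖a i‖) <
      φ (nonintersectIndex (fun i => (fun z => z - a i) '' Ω i) Ωn) + ε) :
    ∀ lam > (0 : ℝ), ∀ eta > (0 : ℝ),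
      ∃ (ω : Fin m → X) (ωn : X),
        (∀ i, ω i ∈ Ω i ∩ Metric.ball xbar lam) ∧ ωn ∈ Ωn ∩ Metric.ball xbar eta ∧
        0 < (⨆ i, ‖ωn + a i - ω i‖) ∧ (⨆ i, ‖ωn + a i - ω i‖) ≤ (⨆ i, ‖a i‖) ∧
        (∃ c < ε, ∃ δ > (0 : ℝ), ∀ (u : Fin m → X) (un : X),
          (∀ i, u i ∈ Ω i) → un ∈ Ωn →
          (∀ i, ‖u i - ω i‖ < δ) → ‖un - ωn‖ < δ → ¬(u = ω ∧ un = ωn) →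
          φ (⨆ i, ‖ωn + a i - ω i‖) - φ (⨆ i, ‖un + a i - u i‖) ≤
            c * max (⨆ i, lam⁻¹ * ‖u i - ω i‖) (eta⁻¹ * ‖un - ωn‖)) ∧
        (∀ c' : ℝ, HasDerivAt φ c' (⨆ i, ‖ωn + a i - ω i‖) →
          c' = 0 ∨ ∃ d : ℝ, c' * d < ε ∧ ∃ δ > (0 : ℝ), ∀ (u : Fin m → X) (un : X),
            (∀ i, u i ∈ Ω i) → un ∈ Ωn →
            (∀ i, ‖u i - ω i‖ < δ) → ‖un - ωn‖ < δ → ¬(u = ω ∧ un = ωn) →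
            (⨆ i, ‖ωn + a i - ω i‖) - (⨆ i, ‖un + a i - u i‖) ≤
              d * max (⨆ i, lam⁻¹ * ‖u i - ω i‖) (eta⁻¹ * ‖un - ωn‖)) := by
  intro lam hlam eta heta
  obtain ⟨σ, hσ, hσε, q, hq, hq₀, hqφ, hslope⟩ :=
    exists_ekeland_point_of_nonintersect hΩ hΩn hxbar hxbarn hφmono hφcont hd hlam heta
  have hgap := gap_nonneg a q
  obtain ⟨hball, hballn⟩ := (paramNorm_lt_one_iff hlam heta _).1 hq₀
  refine ⟨q.1, q.2, fun i => ⟨hq.1 i trivial, mem_ball_iff_norm.2 (hball i)⟩,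
    ⟨hq.2, mem_ball_iff_norm.2 hballn⟩, gap_pos hne hq,
    (hφmono.le_iff_le hgap (Real.iSup_nonneg fun i => norm_nonneg (a i))).1 hqφ,
    ⟨σ, hσε, 1, one_pos, fun u un hu hun _ _ _ => hslope (u, un) ⟨fun i _ => hu i, hun⟩⟩,
    fun c hc => ?_⟩
  obtain h0 | hc0 := (hc.nonneg_of_monotoneOn_Ici
    (hφmono.monotoneOn.mono (Ici_subset_Ici.2 hgap))).eq_or_lt
  · exact Or.inl h0.symm
  obtain ⟨d, hdε, hev⟩ := hc.exists_mul_lt_and_eventually_sub_le (G := gap a) hc0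
    (continuous_gap a).continuousAt (fun p => paramNorm_nonneg hlam heta (p - q)) hslope hσ hσε
  obtain ⟨δ, hδ, hδq⟩ := exists_pos_forall_of_eventually_nhds_prod hev
  exact Or.inr ⟨d, hdε, δ, hδ, fun u un hu hun hu' hun' _ =>
    hδq u un hu' hun' ⟨fun i _ => hu i, hun⟩⟩

/-- slope necessary conditions (limsup form) for the non-intersection
property `⋂ᵢ(Ωᵢ−aᵢ) ∩ Ωₙ = ∅`.  "limsup … < ε" is expressed as: there are `c < ε`
and `δ > 0` bounding the difference quotients for all admissible points within
distance `δ`; the "moreover" part: if `φ` has derivative `c'` at the max value, then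
`c' ·(limsup) < ε` with the convention `0·(+∞)=0`, encoded as
`c' = 0 ∨ ∃ d, c' * d < ε ∧ (the quotient is eventually ≤ d)`. -/
theorem stmt7 {X : Type*} [NormedAddCommGroup X] [NormedSpace ℝ X] [CompleteSpace X]
    {m : ℕ} (hm : 1 ≤ m) (Ω : Fin m → Set X) (Ωn : Set X)
    (hΩ : ∀ i, IsClosed (Ω i)) (hΩn : IsClosed Ωn)
    (xbar : X) (hxbar : ∀ i, xbar ∈ Ω i) (hxbarn : xbar ∈ Ωn)
    (a : Fin m → X) (ε : ℝ) (hε : 0 < ε)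
    (φ : ℝ → ℝ) (hφmono : StrictMonoOn φ (Set.Ici 0))
    (hφcont : ContinuousOn φ (Set.Ici 0)) (hφ0 : φ 0 = 0)
    (hφtop : Tendsto φ atTop atTop)
    (hne : (⋂ i, (fun z => z - a i) '' Ω i) ∩ Ωn = ∅)
    (hd : φ (⨆ i, ‖a i‖) <
      φ (nonintersectIndex (fun i => (fun z => z - a i) '' Ω i) Ωn) + ε) :
    ∀ lam > (0 : ℝ), ∀ eta > (0 : ℝ),
      ∃ (ω : Fin m → X) (ωn : X),
        (∀ i, ω i ∈ Ω i ∩ Metric.ball xbar lam) ∧ ωn ∈ Ωn ∩ Metric.ball xbar eta ∧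
        0 < (⨆ i, ‖ωn + a i - ω i‖) ∧ (⨆ i, ‖ωn + a i - ω i‖) ≤ (⨆ i, ‖a i‖) ∧
        (∃ c < ε, ∃ δ > (0 : ℝ), ∀ (u : Fin m → X) (un : X),
          (∀ i, u i ∈ Ω i) → un ∈ Ωn →
          (∀ i, ‖u i - ω i‖ < δ) → ‖un - ωn‖ < δ → ¬(u = ω ∧ un = ωn) →
          φ (⨆ i, ‖ωn + a i - ω i‖) - φ (⨆ i, ‖un + a i - u i‖) ≤
            c * max (⨆ i, lam⁻¹ * ‖u i - ω i‖) (eta⁻¹ * ‖un - ωn‖)) ∧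
        (∀ c' : ℝ, HasDerivAt φ c' (⨆ i, ‖ωn + a i - ω i‖) →
          c' = 0 ∨ ∃ d : ℝ, c' * d < ε ∧ ∃ δ > (0 : ℝ), ∀ (u : Fin m → X) (un : X),
            (∀ i, u i ∈ Ω i) → un ∈ Ωn →
            (∀ i, ‖u i - ω i‖ < δ) → ‖un - ωn‖ < δ → ¬(u = ω ∧ un = ωn) →
            (⨆ i, ‖ωn + a i - ω i‖) - (⨆ i, ‖un + a i - u i‖) ≤
              d * max (⨆ i, lam⁻¹ * ‖u i - ω i‖) (eta⁻¹ * ‖un - ωn‖)) :=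
  stmt7_general Ω Ωn hΩ hΩn xbar hxbar hxbarn a ε φ hφmono hφcont hne hd
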